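/- arXiv:1901.01999 — 3 statements merged into one kernel-verified Lean document; each statement's English description precedes it below -/
import Mathlib

section
/- The circulant graph Cay(ℤ₁₆, {1, 7, 9, 15}) does not admit pretty good state transfer between vertices 0 and 8. -/
open Matrix Complex Filter Topology

attribute [local instance] Matrix.linftyOpNormedRing Matrix.linftyOpNormedAlgebra

/-- Adjacency matrix of the circulant graph `Cay(ℤ_n, S)`. -/
noncomputable def circAdj (n : ℕ) [NeZero n] (S : Finset (ZMod n)) :
    Matrix (ZMod n) (ZMod n) ℂ :=
  Matrix.of fun a b => if a - b ∈ S then (1 : ℂ) else 0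

/-- Transition matrix `H(t) = exp(-itA)`. -/
noncomputable def transM {n : ℕ} [NeZero n] (A : Matrix (ZMod n) (ZMod n) ℂ) (t : ℝ) :
    Matrix (ZMod n) (ZMod n) ℂ :=
  NormedSpace.exp ((-(t : ℂ) * Complex.I) • A)

/-- The standard basis vector `e_u` of `ℂ^{ℤ_n}`. -/
def eVec {n : ℕ} [NeZero n] (u : ZMod n) : ZMod n → ℂ := Pi.single u 1

/-!
A character `ψ` of `ℤ₁₆` is a left eigenvector of the adjacency matrix with eigenvalue
`θ = ∑_{s ∈ S} ψ s`. When `θ = 0`, the pairing `⟨ψ, H(t) x⟩` does not depend on `t`, so pretty good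
transfer `H(t_k) e₀ → γ e₈` forces `γ ψ 8 = ψ 0 = 1`. For `ψ 1 = ζ` one has
`θ = ζ (1 + ζ⁶)(1 + ζ⁸)`, which vanishes both for `ζ = i` (where `ψ 8 = 1`) and for a primitive
16th root of unity (where `ψ 8 = -1`), giving `γ = 1` and `γ = -1`.
-/

section Exponential

variable {ι : Type*} [Fintype ι] [DecidableEq ι]

theorem Matrix.vecMul_exp_of_vecMul_eq_smul {A : Matrix ι ι ℂ} {v : ι → ℂ} {θ : ℂ}
    (h : v ᵥ* A = θ • v) : v ᵥ* NormedSpace.exp A = Complex.exp θ • v := by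
  have hpow : ∀ k : ℕ, v ᵥ* A ^ k = θ ^ k • v := by
    intro k
    induction k with
    | zero => simp
    | succ k ih => rw [pow_succ', ← vecMul_vecMul, h, smul_vecMul, ih, smul_smul, pow_succ']
  let vecMulHom : Matrix ι ι ℂ →+ (ι → ℂ) :=
    AddMonoidHom.mk' (fun M => v ᵥ* M) fun M N => vecMul_add M N v
  have hsum := (NormedSpace.exp_series_hasSum_exp' (𝕂 := ℂ) A).map vecMulHom
    (continuous_const.matrix_vecMul continuous_id)
  have hsum' : HasSum (fun k : ℕ => (((k.factorial : ℂ))⁻¹ • θ ^ k) • v) (Complex.exp θ • v) := by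
    rw [Complex.exp_eq_exp_ℂ]
    exact (NormedSpace.exp_series_hasSum_exp' (𝕂 := ℂ) θ).smul_const v
  refine hsum.unique (hsum'.congr_fun fun k => ?_)
  simp only [Function.comp_apply, vecMulHom, AddMonoidHom.mk'_apply, vecMul_smul, hpow,
    smul_smul, smul_eq_mul]

end Exponential

section CirculantGraph

variable {n : ℕ} [NeZero n]

theorem vecMul_transM_of_vecMul_eq_smul {A : Matrix (ZMod n) (ZMod n) ℂ} {v : ZMod n → ℂ}
    {θ : ℂ} (h : v ᵥ* A = θ • v) (t : ℝ) :
    v ᵥ* transM A t = Complex.exp (-(t : ℂ) * I * θ) • v := by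
  refine Matrix.vecMul_exp_of_vecMul_eq_smul ?_
  rw [vecMul_smul, h, smul_smul]

theorem dotProduct_eq_of_tendsto_transM_mulVec {A : Matrix (ZMod n) (ZMod n) ℂ}
    {v : ZMod n → ℂ} (hv : v ᵥ* A = 0) {α : Type*} {l : Filter α} [l.NeBot] {t : α → ℝ}
    {x y : ZMod n → ℂ} (h : Tendsto (fun m => transM A (t m) *ᵥ x) l (𝓝 y)) :
    v ⬝ᵥ y = v ⬝ᵥ x := by
  have hconst : ∀ s : ℝ, v ⬝ᵥ (transM A s *ᵥ x) = v ⬝ᵥ x := fun s => by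
    rw [dotProduct_mulVec, vecMul_transM_of_vecMul_eq_smul (θ := 0) (by rw [hv, zero_smul]),
      mul_zero, Complex.exp_zero, one_smul]
  have hcont : Continuous fun z : ZMod n → ℂ => v ⬝ᵥ z := by fun_prop
  have hlim := (hcont.tendsto y).comp h
  simp only [Function.comp_def, hconst] at hlim
  exact tendsto_nhds_unique hlim tendsto_const_nhds

theorem AddChar.vecMul_circAdj (ψ : AddChar (ZMod n) ℂ) (S : Finset (ZMod n)) :
    ⇑ψ ᵥ* circAdj n S = (∑ s ∈ S, ψ s) • ⇑ψ := by
  funext b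
  rw [Pi.smul_apply, smul_eq_mul, Finset.sum_mul, vecMul, dotProduct,
    ← Equiv.sum_comp (Equiv.addRight b)]
  simp [circAdj, AddChar.map_add_eq_mul, Finset.sum_ite_mem]

end CirculantGraph

theorem pgst_phase_mul_pow_eight_eq_one {ζ : ℂ} (hζ : ζ ^ 16 = 1)
    (hθ : (1 + ζ ^ 6) * (1 + ζ ^ 8) = 0) {t : ℕ → ℝ} {γ : ℂ}
    (h : Tendsto (fun m => transM (circAdj 16 ({1, 7, 9, 15} : Finset (ZMod 16))) (t m) *ᵥ eVec 0)
      atTop (𝓝 (γ • eVec (8 : ZMod 16)))) :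
    γ * ζ ^ 8 = 1 := by
  set ψ := AddChar.zmodChar 16 hζ
  have hψ : ⇑ψ ᵥ* circAdj 16 {1, 7, 9, 15} = 0 := by
    have hθ' : ∑ s ∈ ({1, 7, 9, 15} : Finset (ZMod 16)), ψ s = 0 := by
      rw [Finset.sum_insert (by decide), Finset.sum_insert (by decide),
        Finset.sum_insert (by decide), Finset.sum_singleton]
      simp only [ψ, AddChar.zmodChar_apply, ZMod.val_one_eq_one_mod, ZMod.val_ofNat]
      norm_num
      linear_combination ζ * hθ
    rw [ψ.vecMul_circAdj, hθ', zero_smul]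
  have := dotProduct_eq_of_tendsto_transM_mulVec hψ h
  simpa [eVec, ψ, AddChar.zmodChar_apply, ZMod.val_ofNat] using this

/-- `Cay(ℤ₁₆, {1,7,9,15})` has no pretty good state transfer from `0` to `8`. -/
theorem no_pgst_example :
    ¬ ∃ (t : ℕ → ℝ) (γ : ℂ), ‖γ‖ = 1 ∧
      Tendsto
        (fun m => transM (circAdj 16 ({1, 7, 9, 15} : Finset (ZMod 16))) (t m) *ᵥ eVec 0)
        atTop (nhds (γ • eVec (8 : ZMod 16))) := by
  rintro ⟨t, γ, -, h⟩
  have hI8 : I ^ 8 = 1 := by rw [show 8 = 4 * 2 from rfl, pow_mul, I_pow_four, one_pow]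
  have hI6 : I ^ 6 = -1 := by rw [show 6 = 4 + 2 from rfl, pow_add, I_pow_four, I_sq, one_mul]
  have hγ_eq_one : γ * I ^ 8 = 1 :=
    pgst_phase_mul_pow_eight_eq_one (by rw [show 16 = 8 * 2 from rfl, pow_mul, hI8, one_pow])
      (by rw [hI6, add_neg_cancel, zero_mul]) h
  set ω : ℂ := exp (Real.pi * I / 8)
  have hω8 : ω ^ 8 = -1 := by
    rw [← Complex.exp_nat_mul, ← Complex.exp_pi_mul_I]
    push_cast
    ring_nf
  have hγ_eq_neg_one : γ * ω ^ 8 = 1 :=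
    pgst_phase_mul_pow_eight_eq_one (by rw [show 16 = 8 * 2 from rfl, pow_mul, hω8]; norm_num)
      (by rw [hω8, add_neg_cancel, mul_zero]) h
  rw [hI8, mul_one] at hγ_eq_one
  rw [hω8, hγ_eq_one] at hγ_eq_neg_one
  norm_num at hγ_eq_neg_one
end

section
/- If the circulant graph Cay(ℤ_n, S) admits pretty good state transfer between vertices u and v with u ≠ v, then n is even and v = u + n/2 in ℤ_n. -/
open Matrix Complex Filter Topology

attribute [local instance] Matrix.linftyOpNormedRing Matrix.linftyOpNormedAlgebra

/-! The reflection `x ↦ 2u - x` is an automorphism of `Cay(ℤ_n, S)` fixing `u`, so it preserves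
`exp(-itA)` entrywise and the amplitudes of `exp(-itA) e_u` at `v` and at `2u - v` agree for every
`t`. In the limit the amplitude at `v` is `γ ≠ 0` while at every other vertex it is `0`, hence
`2u - v = v`. Then `v - u` is a nonzero element of order two in `ℤ_n`, which forces it to be `n/2`. -/

theorem Matrix.exp_submatrix_equiv {m n 𝔸 : Type*} [Fintype m] [DecidableEq m] [Fintype n]
    [DecidableEq n] [Ring 𝔸] [TopologicalSpace 𝔸] [IsTopologicalRing 𝔸] [T2Space 𝔸]
    [Algebra ℚ 𝔸] (e : n ≃ m) (A : Matrix m m 𝔸) :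
    NormedSpace.exp (A.submatrix e e) = (NormedSpace.exp A).submatrix e e := by
  have hpow (k : ℕ) : (A ^ k).submatrix e e = A.submatrix e e ^ k :=
    map_pow (reindexRingEquiv 𝔸 e.symm) A k
  have := Function.LeftInverse.map_tsum (g := reindexAddEquiv 𝔸 e.symm e.symm)
    (fun k : ℕ => (k.factorial⁻¹ : ℚ) • A ^ k) (L := SummationFilter.unconditional ℕ)
    (continuous_id.matrix_reindex _ _) (continuous_id.matrix_reindex e e) fun M => by simp
  simpa [NormedSpace.exp_eq_tsum_rat, submatrix_smul, hpow] using this.symm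

theorem transM_submatrix {n : ℕ} [NeZero n] (σ : Equiv.Perm (ZMod n))
    (A : Matrix (ZMod n) (ZMod n) ℂ) (t : ℝ) :
    (transM A t).submatrix σ σ = transM (A.submatrix σ σ) t := by
  rw [transM, transM, ← Matrix.exp_submatrix_equiv]
  rfl

theorem circAdj_submatrix_subLeft (n : ℕ) [NeZero n] (S : Finset (ZMod n))
    (hSsym : ∀ s ∈ S, -s ∈ S) (c : ZMod n) :
    (circAdj n S).submatrix (Equiv.subLeft c) (Equiv.subLeft c) = circAdj n S := by
  have hS (s : ZMod n) : -s ∈ S ↔ s ∈ S := ⟨fun h => neg_neg s ▸ hSsym _ h, hSsym s⟩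
  ext a b
  simp only [circAdj, submatrix_apply, Equiv.subLeft_apply, of_apply, sub_sub_sub_cancel_left,
    ← neg_sub a b, hS]

theorem transM_circAdj_sub_sub (n : ℕ) [NeZero n] (S : Finset (ZMod n))
    (hSsym : ∀ s ∈ S, -s ∈ S) (c : ZMod n) (t : ℝ) (x y : ZMod n) :
    transM (circAdj n S) t (c - x) (c - y) = transM (circAdj n S) t x y := by
  have := congrFun₂ (transM_submatrix (Equiv.subLeft c) (circAdj n S) t) x y
  rwa [circAdj_submatrix_subLeft n S hSsym c] at this

theorem eq_of_tendsto_smul_single {α ι 𝕜 : Type*} [DecidableEq ι] [MonoidWithZero 𝕜]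
    [TopologicalSpace 𝕜] [T2Space 𝕜] {l : Filter α} [l.NeBot] {f : α → ι → 𝕜} {γ : 𝕜}
    {v w : ι} (hγ : γ ≠ 0) (hf : Tendsto f l (𝓝 (γ • Pi.single v 1)))
    (hwv : ∀ a, f a w = f a v) : w = v := by
  have hlim : (γ • Pi.single v 1 : ι → 𝕜) w = (γ • Pi.single v 1 : ι → 𝕜) v :=
    tendsto_nhds_unique (((continuous_apply w).tendsto _).comp hf |>.congr hwv)
      (((continuous_apply v).tendsto _).comp hf)
  by_contra hne
  simp [Pi.single_eq_of_ne hne, hγ.symm] at hlim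

theorem ZMod.eq_add_half_of_add_self_eq {n : ℕ} [NeZero n] {u v : ZMod n} (huv : u ≠ v)
    (h : u + u = v + v) : 2 ∣ n ∧ v = u + ((n / 2 : ℕ) : ZMod n) := by
  have hneg : -(v - u) = v - u := by linear_combination h
  obtain h0 | hn := (ZMod.neg_eq_self_iff _).mp hneg
  · exact absurd (sub_eq_zero.mp h0).symm huv
  refine ⟨⟨_, hn.symm⟩, ?_⟩
  have hhalf : n / 2 = (v - u).val := by omega
  rw [hhalf, ZMod.natCast_zmod_val]
  ring

theorem pgst_antipodal_general (n : ℕ) [NeZero n]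
    (S : Finset (ZMod n)) (hSsym : ∀ s ∈ S, -s ∈ S)
    (u v : ZMod n) (huv : u ≠ v)
    (hpgst : ∃ (t : ℕ → ℝ) (γ : ℂ), ‖γ‖ = 1 ∧
      Tendsto (fun m => transM (circAdj n S) (t m) *ᵥ eVec u) atTop
        (nhds (γ • eVec v))) :
    2 ∣ n ∧ v = u + ((n / 2 : ℕ) : ZMod n) := by
  obtain ⟨t, γ, hγ, htend⟩ := hpgst
  have hγ0 : γ ≠ 0 := norm_ne_zero_iff.mp (hγ ▸ one_ne_zero)
  have hfix : u + u - v = v := by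
    refine eq_of_tendsto_smul_single hγ0 htend fun m => ?_
    simp only [eVec, mulVec_single_one, col_apply]
    simpa using transM_circAdj_sub_sub n S hSsym (u + u) (t m) v u
  exact ZMod.eq_add_half_of_add_self_eq huv (by linear_combination hfix)

/-- If a circulant graph has pretty good state transfer between distinct
vertices `u` and `v`, then `n` is even and `v = u + n/2`. -/
theorem pgst_antipodal (n : ℕ) [NeZero n]
    (S : Finset (ZMod n)) (hS0 : (0 : ZMod n) ∉ S) (hSsym : ∀ s ∈ S, -s ∈ S)
    (u v : ZMod n) (huv : u ≠ v)
    (hpgst : ∃ (t : ℕ → ℝ) (γ : ℂ), ‖γ‖ = 1 ∧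
      Tendsto (fun m => transM (circAdj n S) (t m) *ᵥ eVec u) atTop
        (nhds (γ • eVec v))) :
    2 ∣ n ∧ v = u + ((n / 2 : ℕ) : ZMod n) :=
  pgst_antipodal_general n S hSsym u v huv hpgst
end

section
/- Consider the integral circulant graph Cay(ℤ₈, {1,2,3,5,6,7}). This graph is periodic at time 2π and admits perfect state transfer between vertices 0 and 4. -/
open Matrix Complex Filter Topology

attribute [local instance] Matrix.linftyOpNormedRing Matrix.linftyOpNormedAlgebra

section Aux
open scoped Nat

/-- Exponential of a scalar multiple of an idempotent. -/
lemma exp_smul_idem {A : Type*} [NormedRing A] [NormedAlgebra ℂ A] [CompleteSpace A]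
    (E : A) (hE : E * E = E) (c : ℂ) :
    NormedSpace.exp (c • E) = 1 + (Complex.exp c - 1) • E := by
  have hpow : ∀ n : ℕ, E ^ (n + 1) = E := by
    intro n
    induction n with
    | zero => simp
    | succ k ih => rw [pow_succ, ih, hE]
  set f : ℕ → A := fun n => ((n !⁻¹ : ℂ) * c ^ n) • E ^ n with hf
  set g : ℕ → A := fun n => ((n !⁻¹ : ℂ) * c ^ n) • E with hg
  have hsum_f : Summable f := by
    have := NormedSpace.expSeries_summable' (𝕂 := ℂ) (c • E)
    simpa [smul_pow, smul_smul] using this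
  have hsc : Summable fun n : ℕ => (n !⁻¹ : ℂ) * c ^ n := by
    have := NormedSpace.expSeries_summable' (𝕂 := ℂ) (𝔸 := ℂ) c
    simpa [smul_eq_mul] using this
  have hsum_g : Summable g := hsc.smul_const E
  have hfg : ∀ n : ℕ, f n - g n = if n = 0 then 1 - E else 0 := by
    intro n
    cases n with
    | zero => simp [hf, hg]
    | succ k => simp [hf, hg, hpow k]
  have htdiff : ∑' n, (f n - g n) = 1 - E := by
    rw [tsum_eq_single 0 (fun n hn => by rw [hfg n]; simp [hn])]
    simp [hfg]
  have hexp : NormedSpace.exp (c • E) = ∑' n, f n := by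
    rw [NormedSpace.exp_eq_tsum ℂ]
    exact tsum_congr fun n => by simp [hf, smul_pow, smul_smul]
  have hgt : ∑' n, g n = Complex.exp c • E := by
    rw [hsc.tsum_smul_const]
    congr 1
    rw [Complex.exp_eq_exp_ℂ, NormedSpace.exp_eq_tsum ℂ]
    simp [smul_eq_mul]
  have hsub : ∑' n, (f n - g n) = ∑' n, f n - ∑' n, g n := Summable.tsum_sub hsum_f hsum_g
  rw [hexp]
  have : ∑' n, f n = ∑' n, g n + (1 - E) := by
    rw [← htdiff, hsub]; abel
  rw [this, hgt, sub_smul, one_smul]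
  abel

end Aux

/-- The all-ones matrix. -/
noncomputable def Jm : Matrix (ZMod 8) (ZMod 8) ℂ := Matrix.of fun _ _ => (1 : ℂ)

/-- The permutation matrix for translation by `4`. -/
noncomputable def Pm : Matrix (ZMod 8) (ZMod 8) ℂ :=
  Matrix.of fun a b => if a - b = 4 then (1 : ℂ) else 0

lemma Jm_mul_Jm : Jm * Jm = (8 : ℂ) • Jm := by
  ext a b
  simp [Jm, Matrix.mul_apply]

lemma Pm_mul_Pm : Pm * Pm = 1 := by
  ext a b
  have h1 : ∀ a c : ZMod 8, (a - c = 4) = (c = a - 4) := by decide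
  have h3 : ∀ a b : ZMod 8, (b = a - 4 - 4) = (a = b) := by decide
  simp only [Pm, Matrix.mul_apply, Matrix.of_apply, ite_mul, one_mul, zero_mul, h1]
  simp [h3, Matrix.one_apply]

lemma Jm_mul_Pm : Jm * Pm = Jm := by
  ext a b
  have h1 : ∀ b c : ZMod 8, (c - b = 4) = (c = b + 4) := by decide
  simp only [Jm, Pm, Matrix.mul_apply, Matrix.of_apply, one_mul, h1]
  simp

lemma Pm_mul_Jm : Pm * Jm = Jm := by
  ext a b
  have h1 : ∀ a c : ZMod 8, (a - c = 4) = (c = a - 4) := by decide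
  simp only [Jm, Pm, Matrix.mul_apply, Matrix.of_apply, mul_one, h1]
  simp

lemma circAdj_eq : circAdj 8 ({1, 2, 3, 5, 6, 7} : Finset (ZMod 8)) = Jm - 1 - Pm := by
  ext a b
  have hmem : ∀ d : ZMod 8, (d ∈ ({1, 2, 3, 5, 6, 7} : Finset (ZMod 8))) = (¬ d = 0 ∧ ¬ d = 4) :=
    by decide
  have h0 : ∀ a b : ZMod 8, (a - b = 0) = (a = b) := by decide
  simp only [circAdj, Jm, Pm, Matrix.of_apply, Matrix.sub_apply, Matrix.one_apply, hmem, h0]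
  by_cases h4 : a = b <;> by_cases h5 : a - b = 4 <;> simp only [h4, h5, if_true, if_false]
  · exact absurd h5 (by rw [h4, sub_self]; decide)
  · simp [h4]; decide
  · have : ¬ a = b := fun h => by rw [h, sub_self] at h5; exact absurd h5 (by decide)
    simp [h5, this]
  · simp [h4, h5]

/-- The idempotent `J/8`. -/
noncomputable def E6m : Matrix (ZMod 8) (ZMod 8) ℂ := (8 : ℂ)⁻¹ • Jm

/-- The idempotent `(1+P)/2`. -/
noncomputable def Qm : Matrix (ZMod 8) (ZMod 8) ℂ := (2 : ℂ)⁻¹ • (1 + Pm)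

lemma E6m_idem : E6m * E6m = E6m := by
  rw [E6m, smul_mul_smul_comm, Jm_mul_Jm]
  rw [smul_smul]
  congr 1
  norm_num

lemma Qm_idem : Qm * Qm = Qm := by
  have h : (1 + Pm) * (1 + Pm) = (2 : ℂ) • 1 + (2 : ℂ) • Pm := by
    rw [mul_add, add_mul, add_mul, one_mul, one_mul, mul_one, Pm_mul_Pm]
    module
  rw [Qm, smul_mul_smul_comm, h]
  module

lemma commute_Jm_Pm : Commute Jm Pm := by
  rw [Commute, SemiconjBy, Jm_mul_Pm, Pm_mul_Jm]

/-- The master splitting of the transition matrix. -/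
lemma exp_smul_adj (c : ℂ) :
    NormedSpace.exp (c • circAdj 8 ({1, 2, 3, 5, 6, 7} : Finset (ZMod 8))) =
      (1 + (Complex.exp (8 * c) - 1) • E6m) *
        ((Complex.exp (-c)) • 1 *
          ((1 + (Complex.exp (-(2 * c)) - 1) • Qm) * (Complex.exp c • 1))) := by
  have hsplit : c • circAdj 8 ({1, 2, 3, 5, 6, 7} : Finset (ZMod 8)) =
      c • Jm + ((-c) • (1 : Matrix (ZMod 8) (ZMod 8) ℂ) + (-c) • Pm) := by
    rw [circAdj_eq]; module
  have hc1 : Commute (c • Jm) ((-c) • (1 : Matrix (ZMod 8) (ZMod 8) ℂ) + (-c) • Pm) :=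
    Commute.add_right (((Commute.one_right Jm).smul_left c).smul_right (-c))
      ((commute_Jm_Pm.smul_left c).smul_right (-c))
  have hc2 : Commute ((-c) • (1 : Matrix (ZMod 8) (ZMod 8) ℂ)) ((-c) • Pm) :=
    ((Commute.one_left Pm).smul_right (-c)).smul_left (-c)
  rw [hsplit, Matrix.exp_add_of_commute _ _ hc1, Matrix.exp_add_of_commute _ _ hc2]
  congr 1
  · -- exp (c • Jm)
    have h : c • Jm = (8 * c) • E6m := by
      rw [E6m, smul_smul]
      congr 1
      ring
    erw [h, exp_smul_idem E6m E6m_idem]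
  congr 1
  · -- exp ((-c) • 1)
    erw [exp_smul_idem (1 : Matrix (ZMod 8) (ZMod 8) ℂ) (one_mul 1)]
    module
  · -- exp ((-c) • Pm)
    have hdecomp : (-c) • Pm = (-(2 * c)) • Qm + c • (1 : Matrix (ZMod 8) (ZMod 8) ℂ) := by
      rw [Qm]; module
    have hc3 : Commute ((-(2 * c)) • Qm) (c • (1 : Matrix (ZMod 8) (ZMod 8) ℂ)) :=
      ((Commute.one_right Qm).smul_left _).smul_right _
    erw [hdecomp, Matrix.exp_add_of_commute _ _ hc3, exp_smul_idem Qm Qm_idem,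
      exp_smul_idem (1 : Matrix (ZMod 8) (ZMod 8) ℂ) (one_mul 1)]
    congr 1
    module

/-- `Cay(ℤ₈, {1,2,3,5,6,7})` is periodic at `2π` and has perfect state transfer
between `0` and `4`. -/
theorem integral_circulant_pst :
    (∃ γ : ℂ, ‖γ‖ = 1 ∧
      transM (circAdj 8 ({1, 2, 3, 5, 6, 7} : Finset (ZMod 8))) (2 * Real.pi) =
        γ • (1 : Matrix (ZMod 8) (ZMod 8) ℂ)) ∧
    (∃ (t₀ : ℝ) (γ : ℂ), ‖γ‖ = 1 ∧
      transM (circAdj 8 ({1, 2, 3, 5, 6, 7} : Finset (ZMod 8))) t₀ *ᵥ eVec 0 =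
        γ • eVec (4 : ZMod 8)) := by
  constructor
  · refine ⟨1, by simp, ?_⟩
    rw [transM, exp_smul_adj]
    have e1 : Complex.exp (8 * (-(↑(2 * Real.pi) : ℂ) * Complex.I)) = 1 := by
      rw [show (8 : ℂ) * (-(↑(2 * Real.pi) : ℂ) * Complex.I) =
        ((-8 : ℤ) : ℂ) * (2 * (Real.pi : ℂ) * Complex.I) by push_cast; ring]
      exact Complex.exp_int_mul_two_pi_mul_I (-8)
    have e2 : Complex.exp (-(-(↑(2 * Real.pi) : ℂ) * Complex.I)) = 1 := by
      rw [show -(-(↑(2 * Real.pi) : ℂ) * Complex.I) =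
        ((1 : ℤ) : ℂ) * (2 * (Real.pi : ℂ) * Complex.I) by push_cast; ring]
      exact Complex.exp_int_mul_two_pi_mul_I 1
    have e3 : Complex.exp (-(2 * (-(↑(2 * Real.pi) : ℂ) * Complex.I))) = 1 := by
      rw [show -(2 * (-(↑(2 * Real.pi) : ℂ) * Complex.I)) =
        ((2 : ℤ) : ℂ) * (2 * (Real.pi : ℂ) * Complex.I) by push_cast; ring]
      exact Complex.exp_int_mul_two_pi_mul_I 2
    have e4 : Complex.exp (-(↑(2 * Real.pi) : ℂ) * Complex.I) = 1 := by
      rw [show (-(↑(2 * Real.pi) : ℂ) * Complex.I) =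
        ((-1 : ℤ) : ℂ) * (2 * (Real.pi : ℂ) * Complex.I) by push_cast; ring]
      exact Complex.exp_int_mul_two_pi_mul_I (-1)
    rw [e1, e2, e3, e4]
    simp
  · refine ⟨Real.pi / 2, -1, by simp, ?_⟩
    rw [transM, exp_smul_adj]
    have e1 : Complex.exp (8 * (-(↑(Real.pi / 2) : ℂ) * Complex.I)) = 1 := by
      rw [show (8 : ℂ) * (-(↑(Real.pi / 2) : ℂ) * Complex.I) =
        ((-2 : ℤ) : ℂ) * (2 * (Real.pi : ℂ) * Complex.I) by push_cast; ring]
      exact Complex.exp_int_mul_two_pi_mul_I (-2)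
    have e2 : Complex.exp (-(-(↑(Real.pi / 2) : ℂ) * Complex.I)) = Complex.I := by
      rw [show -(-(↑(Real.pi / 2) : ℂ) * Complex.I) = (↑(Real.pi / 2) : ℂ) * Complex.I by ring,
        Complex.exp_mul_I, ← Complex.ofReal_cos, ← Complex.ofReal_sin,
        Real.cos_pi_div_two, Real.sin_pi_div_two]
      simp
    have e3 : Complex.exp (-(2 * (-(↑(Real.pi / 2) : ℂ) * Complex.I))) = -1 := by
      rw [show -(2 * (-(↑(Real.pi / 2) : ℂ) * Complex.I)) = (Real.pi : ℂ) * Complex.I by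
        push_cast; ring]
      exact Complex.exp_pi_mul_I
    have e4 : Complex.exp (-(↑(Real.pi / 2) : ℂ) * Complex.I) = -Complex.I := by
      rw [show (-(↑(Real.pi / 2) : ℂ) * Complex.I) = (↑(-(Real.pi / 2)) : ℂ) * Complex.I by
        push_cast; ring,
        Complex.exp_mul_I, ← Complex.ofReal_cos, ← Complex.ofReal_sin,
        Real.cos_neg, Real.sin_neg, Real.cos_pi_div_two, Real.sin_pi_div_two]
      simp
    rw [e1, e2, e3, e4]
    have hH : (1 + ((1:ℂ) - 1) • E6m) *
        (Complex.I • (1 : Matrix (ZMod 8) (ZMod 8) ℂ) *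
          ((1 + ((-1 : ℂ) - 1) • Qm) * ((-Complex.I) • 1))) = (-1 : ℂ) • Pm := by
      rw [sub_self, zero_smul, add_zero]
      simp only [Matrix.smul_mul, Matrix.mul_smul, one_mul, mul_one, smul_smul]
      rw [show -Complex.I * Complex.I = 1 by simp [Complex.I_mul_I], one_smul, Qm]
      module
    rw [hH, Matrix.smul_mulVec]
    congr 1
    funext a
    have hc : ∀ a : ZMod 8, (a - 0 = 4) = (a = 4) := by decide
    simp [Pm, eVec, Matrix.mulVec_single, Pi.single_apply, hc]
end
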